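/- arXiv:2305.07966 — 2 statements merged into one kernel-verified Lean document; each statement's English description precedes it below -/
import Mathlib

section
/- Let X be a vector space and let A, C ∈ End(X)⟦z⟧ be formal power series of operators with zero constant term such that [A, ad_C^m(A)] = 0 for every m ≥ 0. Then e^{A+C} · e^{−C} = exp( ((e^{ad_C} − 1)/ad_C)(A) ), where (e^{ad_C} − 1)/ad_C denotes the operator ∑_{k≥0} ad_C^k/(k+1)!. -/
open PowerSeries

/-- Iterated adjoint action `ad_C^m(A)` on formal power series of operators,
where `ad_C(X) = CX − XC`. -/
noncomputable def adPow {R : Type*} [Ring R] (C : PowerSeries R) (m : ℕ)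
    (A : PowerSeries R) : PowerSeries R :=
  (fun X => C * X - X * C)^[m] A

/-- The exponential `exp(A) = ∑_{k≥0} A^k/k!` of a formal power series of operators
with zero constant term (defined coefficientwise; the sum is finite in each degree
since `A` has zero constant term). -/
noncomputable def expPS {R : Type*} [Ring R] [Algebra ℚ R] (A : PowerSeries R) :
    PowerSeries R :=
  PowerSeries.mk fun n =>
    ∑ k ∈ Finset.range (n + 1), (k.factorial : ℚ)⁻¹ • PowerSeries.coeff n (A ^ k)

/-- `((e^{ad_C} − 1)/ad_C)(A) = ∑_{k≥0} ad_C^k(A)/(k+1)!` (defined coefficientwise;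
the sum is finite in each degree since `A` and `C` have zero constant term). -/
noncomputable def expm1DivAd {R : Type*} [Ring R] [Algebra ℚ R]
    (C A : PowerSeries R) : PowerSeries R :=
  PowerSeries.mk fun n =>
    ∑ k ∈ Finset.range (n + 1),
      ((k + 1).factorial : ℚ)⁻¹ • PowerSeries.coeff n (adPow C k A)

/-!
Introduce a formal parameter `t` and compare `Φ(t) = e^{t(A+C)} e^{-tC}` with `Ψ(t) = exp g(t)`,
where `g(t) = ((e^{t ad_C} - 1)/ad_C)(A)`. Both solve `Y' = Y · e^{t ad_C}(A)` with `Y(0) = 1`: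
`Φ` because `A e^{-tC} = e^{-tC} e^{t ad_C}(A)`, and `Ψ` because `g' = e^{t ad_C}(A)` commutes
with `g`, all `ad_C^i(A)` commuting with each other by the hypothesis and the Leibniz rule for
`ad_C`. A formal ODE has only one solution with a given constant term, so `Φ = Ψ` in
`End(X)⟦z⟧⟦t⟧`. Since `A` and `C` have no constant term, the `tᵐ`-coefficients of both sides
have `z`-order at least `m`, so `t = 1` can be substituted, and this substitution is
multiplicative and commutes with `exp`.
-/

open Finset
open scoped Nat

lemma commute_iterate_lie_of_commute {R : Type*} [Ring R] {a c : R}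
    (h : ∀ m, Commute a ((fun x => ⁅c, x⁆)^[m] a)) (i j : ℕ) :
    Commute ((fun x => ⁅c, x⁆)^[i] a) ((fun x => ⁅c, x⁆)^[j] a) := by
  induction i generalizing j with
  | zero => exact h j
  | succ i ih =>
    set x := (fun x => ⁅c, x⁆)^[i] a
    set y := (fun x => ⁅c, x⁆)^[j] a
    have hxy : ⁅x, y⁆ = 0 := commute_iff_lie_eq.mp (ih j)
    have hxy' : ⁅x, ⁅c, y⁆⁆ = 0 := by
      simpa [Function.iterate_succ_apply'] using commute_iff_lie_eq.mp (ih (j + 1))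
    have hleibniz : ⁅c, ⁅x, y⁆⁆ = ⁅⁅c, x⁆, y⁆ + ⁅x, ⁅c, y⁆⁆ := by
      simp only [Ring.lie_def]
      noncomm_ring
    rw [hxy, hxy', Ring.lie_def, mul_zero, zero_mul, sub_zero, add_zero] at hleibniz
    rw [Function.iterate_succ_apply']
    exact commute_iff_lie_eq.mpr hleibniz.symm

namespace PowerSeries

lemma commute_of_commute_coeff {R : Type*} [Semiring R] {f g : R⟦X⟧}
    (h : ∀ i j, Commute (coeff i f) (coeff j g)) : Commute f g := by
  ext n
  rw [coeff_mul, coeff_mul, ← Nat.sum_antidiagonal_swap]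
  exact sum_congr rfl fun p _ => (h p.2 p.1).eq

section Derivative

variable {R : Type*} [Ring R]

/-- `d/dX` over a possibly noncommutative ring (`PowerSeries.derivative` needs `CommSemiring`). -/
noncomputable def ncDeriv (f : R⟦X⟧) : R⟦X⟧ :=
  mk fun n => (n + 1) • coeff (n + 1) f

@[simp]
lemma coeff_ncDeriv (f : R⟦X⟧) (n : ℕ) : coeff n (ncDeriv f) = (n + 1) • coeff (n + 1) f :=
  coeff_mk _ _

@[simp]
lemma ncDeriv_C (r : R) : ncDeriv (C r) = 0 := by
  ext n
  simp

lemma ncDeriv_mul (f g : R⟦X⟧) : ncDeriv (f * g) = ncDeriv f * g + f * ncDeriv g := by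
  ext n
  have hleft : ∑ p ∈ antidiagonal n, coeff p.1 (ncDeriv f) * coeff p.2 g
      = ∑ p ∈ antidiagonal (n + 1), p.1 • (coeff p.1 f * coeff p.2 g) := by
    simp only [Nat.sum_antidiagonal_succ, coeff_ncDeriv, smul_mul_assoc, zero_smul, zero_add]
  have hright : ∑ p ∈ antidiagonal n, coeff p.1 f * coeff p.2 (ncDeriv g)
      = ∑ p ∈ antidiagonal (n + 1), p.2 • (coeff p.1 f * coeff p.2 g) := by
    simp only [Nat.sum_antidiagonal_succ', coeff_ncDeriv, mul_smul_comm, zero_smul, zero_add]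
  rw [coeff_ncDeriv, map_add, coeff_mul, coeff_mul, coeff_mul, hleft, hright, ← sum_add_distrib,
    smul_sum]
  refine sum_congr rfl fun p hp => ?_
  rw [← add_smul, mem_antidiagonal.mp hp]

lemma ncDeriv_pow {f : R⟦X⟧} (hf : Commute f (ncDeriv f)) (k : ℕ) :
    ncDeriv (f ^ (k + 1)) = (k + 1) • (f ^ k * ncDeriv f) := by
  induction k with
  | zero => simp
  | succ k ih =>
    rw [pow_succ', ncDeriv_mul, ih, mul_smul_comm, ← mul_assoc, ← pow_succ',
      ((hf.symm.pow_right (k + 1)).eq), succ_nsmul _ (k + 1), add_comm]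

lemma eq_of_ncDeriv_eq_mul [IsAddTorsionFree R] {f g u : R⟦X⟧} (hf : ncDeriv f = f * u)
    (hg : ncDeriv g = g * u) (h0 : constantCoeff f = constantCoeff g) : f = g := by
  ext n
  induction n using Nat.strong_induction_on with
  | _ n ih =>
    rcases n with _ | n
    · simpa using h0
    refine (nsmul_right_inj n.succ_ne_zero).mp ?_
    rw [← coeff_ncDeriv, ← coeff_ncDeriv, hf, hg, coeff_mul, coeff_mul]
    refine sum_congr rfl fun p hp => ?_
    rw [ih p.1 (Nat.antidiagonal.fst_lt hp)]

end Derivative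

lemma coeff_pow_eq_zero_of_lt {R : Type*} [Semiring R] {f : R⟦X⟧} (hf : constantCoeff f = 0)
    {n k : ℕ} (h : n < k) : coeff n (f ^ k) = 0 :=
  coeff_of_lt_order n ((Nat.cast_lt.mpr h).trans_le (le_order_pow_of_constantCoeff_eq_zero k hf))

section Exp

variable {R : Type*} [Ring R] [Algebra ℚ R]

lemma succ_nsmul_inv_factorial_succ_smul (n : ℕ) (x : R) :
    (n + 1) • (((n + 1)! : ℚ)⁻¹ • x) = (n ! : ℚ)⁻¹ • x := by
  rw [← Nat.cast_smul_eq_nsmul ℚ, smul_smul, Nat.factorial_succ, Nat.cast_mul, mul_inv,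
    ← mul_assoc, Nat.cast_add_one, mul_inv_cancel₀ (by positivity), one_mul]

lemma coeff_expPS_eq_sum {f : R⟦X⟧} (hf : constantCoeff f = 0) {n N : ℕ} (h : n ≤ N) :
    coeff n (expPS f) = ∑ k ∈ range (N + 1), (k ! : ℚ)⁻¹ • coeff n (f ^ k) := by
  refine (coeff_mk _ _).trans (sum_subset (range_subset_range.mpr (by omega)) fun k hk hk' => ?_)
  rw [mem_range] at hk hk'
  rw [coeff_pow_eq_zero_of_lt hf (by omega), smul_zero]

@[simp]
lemma constantCoeff_expPS (f : R⟦X⟧) : constantCoeff (expPS f) = 1 := by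
  simp [expPS]

lemma ncDeriv_expPS {f : R⟦X⟧} (hf : constantCoeff f = 0) (hfD : Commute f (ncDeriv f)) :
    ncDeriv (expPS f) = expPS f * ncDeriv f := by
  ext m
  have hterm (k : ℕ) : (m + 1) • (((k + 1)! : ℚ)⁻¹ • coeff (m + 1) (f ^ (k + 1)))
      = (k ! : ℚ)⁻¹ • coeff m (f ^ k * ncDeriv f) := by
    rw [smul_comm, ← coeff_ncDeriv, ncDeriv_pow hfD, map_nsmul, smul_comm,
      succ_nsmul_inv_factorial_succ_smul]
  calc coeff m (ncDeriv (expPS f))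
      = ∑ k ∈ range (m + 1), (k ! : ℚ)⁻¹ • coeff m (f ^ k * ncDeriv f) := by
        rw [coeff_ncDeriv, expPS, coeff_mk, smul_sum, sum_range_succ']
        simp [hterm, coeff_one]
    _ = ∑ p ∈ antidiagonal m, ∑ k ∈ range (m + 1),
          (k ! : ℚ)⁻¹ • (coeff p.1 (f ^ k) * coeff p.2 (ncDeriv f)) := by
        simp only [coeff_mul, smul_sum]
        exact sum_comm
    _ = coeff m (expPS f * ncDeriv f) := by
        rw [coeff_mul]
        refine sum_congr rfl fun p hp => ?_
        rw [coeff_expPS_eq_sum hf (HasAntidiagonal.antidiagonal.fst_le hp), sum_mul]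
        simp only [smul_mul_assoc]

noncomputable def expMulX (b : R) : R⟦X⟧ :=
  mk fun n => (n ! : ℚ)⁻¹ • b ^ n

@[simp]
lemma coeff_expMulX (b : R) (n : ℕ) : coeff n (expMulX b) = (n ! : ℚ)⁻¹ • b ^ n :=
  coeff_mk _ _

@[simp]
lemma constantCoeff_expMulX (b : R) : constantCoeff (expMulX b) = 1 := by
  simp [← coeff_zero_eq_constantCoeff]

lemma ncDeriv_expMulX (b : R) : ncDeriv (expMulX b) = expMulX b * C b := by
  ext n
  rw [coeff_ncDeriv, coeff_mul_C, coeff_expMulX, coeff_expMulX, smul_mul_assoc, ← pow_succ,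
    succ_nsmul_inv_factorial_succ_smul]

lemma commute_C_expMulX (b : R) : Commute (C b) (expMulX b) := by
  ext n
  rw [coeff_C_mul, coeff_mul_C, coeff_expMulX, mul_smul_comm, smul_mul_assoc, ← pow_succ',
    ← pow_succ]

end Exp

section AdjointSeries

variable {R : Type*} [Ring R] [Algebra ℚ R]

/-- `e^{X ad_c}(a)`, the deformation of `e^{ad_c}(a)` by the formal parameter `X`. -/
noncomputable def expAdSeries (c a : R) : R⟦X⟧ :=
  mk fun k => (k ! : ℚ)⁻¹ • (fun x => ⁅c, x⁆)^[k] a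

/-- `((e^{X ad_c} - 1)/ad_c)(a)`, whose value at `X = 1` is `((e^{ad_c} - 1)/ad_c)(a)`. -/
noncomputable def expm1DivAdSeries (c a : R) : R⟦X⟧ :=
  X * mk fun k => ((k + 1)! : ℚ)⁻¹ • (fun x => ⁅c, x⁆)^[k] a

@[simp]
lemma coeff_expAdSeries (c a : R) (k : ℕ) :
    coeff k (expAdSeries c a) = (k ! : ℚ)⁻¹ • (fun x => ⁅c, x⁆)^[k] a :=
  coeff_mk _ _

@[simp]
lemma constantCoeff_expAdSeries (c a : R) : constantCoeff (expAdSeries c a) = a := by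
  simp [← coeff_zero_eq_constantCoeff]

@[simp]
lemma constantCoeff_expm1DivAdSeries (c a : R) : constantCoeff (expm1DivAdSeries c a) = 0 := by
  simp [expm1DivAdSeries]

lemma coeff_succ_expm1DivAdSeries (c a : R) (k : ℕ) :
    coeff (k + 1) (expm1DivAdSeries c a) = ((k + 1)! : ℚ)⁻¹ • (fun x => ⁅c, x⁆)^[k] a := by
  rw [expm1DivAdSeries, coeff_succ_X_mul, coeff_mk]

lemma ncDeriv_expm1DivAdSeries (c a : R) : ncDeriv (expm1DivAdSeries c a) = expAdSeries c a := by
  ext k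
  rw [coeff_ncDeriv, coeff_succ_expm1DivAdSeries, coeff_expAdSeries,
    succ_nsmul_inv_factorial_succ_smul]

lemma ncDeriv_expAdSeries (c a : R) :
    ncDeriv (expAdSeries c a) = C c * expAdSeries c a - expAdSeries c a * C c := by
  ext k
  rw [coeff_ncDeriv, map_sub, coeff_C_mul, coeff_mul_C, coeff_expAdSeries, coeff_expAdSeries,
    succ_nsmul_inv_factorial_succ_smul, Function.iterate_succ_apply', Ring.lie_def, smul_sub,
    mul_smul_comm, smul_mul_assoc]

lemma commute_expm1DivAdSeries_expAdSeries {c a : R}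
    (h : ∀ m, Commute a ((fun x => ⁅c, x⁆)^[m] a)) :
    Commute (expm1DivAdSeries c a) (expAdSeries c a) := by
  refine commute_of_commute_coeff fun i j => ?_
  rcases i with _ | i
  · simp
  · rw [coeff_succ_expm1DivAdSeries, coeff_expAdSeries]
    exact ((commute_iterate_lie_of_commute h i j).smul_left _).smul_right _

lemma C_mul_expMulX_neg (c a : R) :
    C a * expMulX (-c) = expMulX (-c) * expAdSeries c a := by
  have := IsAddTorsionFree.of_module_rat R
  refine eq_of_ncDeriv_eq_mul (u := C (-c)) ?_ ?_ (by simp)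
  · rw [ncDeriv_mul, ncDeriv_C, zero_mul, zero_add, ncDeriv_expMulX, mul_assoc]
  · rw [ncDeriv_mul, ncDeriv_expMulX, ncDeriv_expAdSeries, map_neg]
    noncomm_ring

theorem expMulX_add_mul_expMulX_neg {c a : R} (h : ∀ m, Commute a ((fun x => ⁅c, x⁆)^[m] a)) :
    expMulX (a + c) * expMulX (-c) = expPS (expm1DivAdSeries c a) := by
  have := IsAddTorsionFree.of_module_rat R
  have hc : Commute (C c) (expMulX (-c)) := by
    simpa using (commute_C_expMulX (-c)).neg_left
  refine eq_of_ncDeriv_eq_mul (u := expAdSeries c a) ?_ ?_ (by simp)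
  · rw [ncDeriv_mul, ncDeriv_expMulX, ncDeriv_expMulX, map_add, map_neg]
    calc expMulX (a + c) * (C a + C c) * expMulX (-c) + expMulX (a + c) * (expMulX (-c) * -C c)
        = expMulX (a + c) * (C a * expMulX (-c))
          + expMulX (a + c) * (C c * expMulX (-c) - expMulX (-c) * C c) := by noncomm_ring
      _ = expMulX (a + c) * expMulX (-c) * expAdSeries c a := by
        rw [C_mul_expMulX_neg, hc.eq, sub_self, mul_zero, add_zero, mul_assoc]
  · have hg := commute_expm1DivAdSeries_expAdSeries h
    rw [← ncDeriv_expm1DivAdSeries] at hg ⊢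
    exact ncDeriv_expPS (constantCoeff_expm1DivAdSeries c a) hg

end AdjointSeries

section EvalOne

variable {R : Type*} [Ring R]

lemma le_order_iterate_lie {a c : R⟦X⟧} (ha : constantCoeff a = 0) (hc : constantCoeff c = 0)
    (k : ℕ) : (k + 1 : ℕ∞) ≤ ((fun x => ⁅c, x⁆)^[k] a).order := by
  induction k with
  | zero => simpa using one_le_order_iff_constCoeff_eq_zero.mpr ha
  | succ k ih =>
    have hc1 := one_le_order_iff_constCoeff_eq_zero.mpr hc
    rw [Function.iterate_succ_apply', Ring.lie_def, sub_eq_add_neg]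
    refine le_trans (le_min ?_ ?_) (min_order_le_order_add _ _)
    · calc ((k + 1 : ℕ) + 1 : ℕ∞) = 1 + (k + 1) := by push_cast; ring
        _ ≤ c.order + ((fun x => ⁅c, x⁆)^[k] a).order := add_le_add hc1 ih
        _ ≤ _ := le_order_mul _ _
    · rw [order_neg]
      calc ((k + 1 : ℕ) + 1 : ℕ∞) = (k + 1) + 1 := by push_cast; ring
        _ ≤ ((fun x => ⁅c, x⁆)^[k] a).order + c.order := add_le_add ih hc1
        _ ≤ _ := le_order_mul _ _

/-- Series on which the substitution `X = 1` (`evalOne`) converges and is multiplicative. -/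
def admissible : Submonoid R⟦X⟧⟦X⟧ where
  carrier := {f | ∀ m : ℕ, (m : ℕ∞) ≤ (coeff m f).order}
  one_mem' m := by rcases m with _ | m <;> simp [coeff_one]
  mul_mem' {f g} hf hg m := by
    refine le_order _ _ fun n hn => ?_
    rw [coeff_mul, map_sum]
    refine sum_eq_zero fun p hp => coeff_of_lt_order n ?_
    calc (n : ℕ∞) < m := hn
      _ = p.1 + p.2 := by rw [← mem_antidiagonal.mp hp, Nat.cast_add]
      _ ≤ (coeff p.1 f).order + (coeff p.2 g).order := add_le_add (hf _) (hg _)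
      _ ≤ _ := le_order_mul _ _

lemma coeff_coeff_eq_zero_of_mem_admissible {f : R⟦X⟧⟦X⟧} (hf : f ∈ admissible) {m n : ℕ}
    (h : n < m) : coeff n (coeff m f) = 0 :=
  coeff_of_lt_order n ((Nat.cast_lt.mpr h).trans_le (hf m))

/-- The substitution `X = 1` for the outer variable. The sum giving the `n`-th coefficient stops
at `m = n`, which loses nothing on `admissible` series. -/
noncomputable def evalOne (f : R⟦X⟧⟦X⟧) : R⟦X⟧ :=
  mk fun n => ∑ m ∈ range (n + 1), coeff n (coeff m f)

lemma coeff_evalOne_eq_sum {f : R⟦X⟧⟦X⟧} (hf : f ∈ admissible) {n N : ℕ} (h : n ≤ N) :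
    coeff n (evalOne f) = ∑ m ∈ range (N + 1), coeff n (coeff m f) := by
  refine (coeff_mk _ _).trans (sum_subset (range_subset_range.mpr (by omega)) fun m hm hm' => ?_)
  rw [mem_range] at hm hm'
  exact coeff_coeff_eq_zero_of_mem_admissible hf (by omega)

lemma sum_range_sum_antidiagonal_eq_sum_range_sum_range {M : Type*} [AddCommMonoid M] {n : ℕ}
    {F : ℕ → ℕ → M} (hF : ∀ i j, n < i + j → F i j = 0) :
    ∑ m ∈ range (n + 1), ∑ p ∈ antidiagonal m, F p.1 p.2
      = ∑ i ∈ range (n + 1), ∑ j ∈ range (n + 1), F i j := by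
  simp_rw [Nat.sum_antidiagonal_eq_sum_range_succ F, sum_range_diag_flip]
  refine sum_congr rfl fun i hi => sum_subset (range_subset_range.mpr (by omega)) fun j _ hj => ?_
  rw [mem_range] at hi hj
  exact hF i j (by omega)

lemma evalOne_mul {f g : R⟦X⟧⟦X⟧} (hf : f ∈ admissible) (hg : g ∈ admissible) :
    evalOne (f * g) = evalOne f * evalOne g := by
  ext n
  calc coeff n (evalOne (f * g))
      = ∑ m ∈ range (n + 1), ∑ p ∈ antidiagonal m, coeff n (coeff p.1 f * coeff p.2 g) := by
        simp only [evalOne, coeff_mk, coeff_mul, map_sum]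
    _ = ∑ i ∈ range (n + 1), ∑ j ∈ range (n + 1), coeff n (coeff i f * coeff j g) :=
        sum_range_sum_antidiagonal_eq_sum_range_sum_range fun i j h => coeff_of_lt_order n <|
          calc (n : ℕ∞) < i + j := by exact_mod_cast h
            _ ≤ (coeff i f).order + (coeff j g).order := add_le_add (hf i) (hg j)
            _ ≤ _ := le_order_mul _ _
    _ = ∑ p ∈ antidiagonal n, ∑ i ∈ range (n + 1), ∑ j ∈ range (n + 1),
          coeff p.1 (coeff i f) * coeff p.2 (coeff j g) := by
        simp only [coeff_mul]
        rw [sum_congr rfl fun i _ => sum_comm, sum_comm]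
    _ = coeff n (evalOne f * evalOne g) := by
        rw [coeff_mul]
        refine sum_congr rfl fun p hp => ?_
        rw [coeff_evalOne_eq_sum hf (HasAntidiagonal.antidiagonal.fst_le hp),
          coeff_evalOne_eq_sum hg (HasAntidiagonal.antidiagonal.snd_le hp), sum_mul_sum]

lemma evalOne_one : evalOne (1 : R⟦X⟧⟦X⟧) = 1 := by
  ext n
  simp [evalOne, sum_range_succ', coeff_one]

lemma evalOne_pow {f : R⟦X⟧⟦X⟧} (hf : f ∈ admissible) (k : ℕ) :
    evalOne (f ^ k) = evalOne f ^ k := by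
  induction k with
  | zero => exact evalOne_one
  | succ k ih => rw [pow_succ, evalOne_mul (pow_mem hf k) hf, ih, pow_succ]

variable [Algebra ℚ R]

lemma evalOne_expPS {f : R⟦X⟧⟦X⟧} (hf : f ∈ admissible) (h0 : constantCoeff f = 0) :
    evalOne (expPS f) = expPS (evalOne f) := by
  ext n
  calc coeff n (evalOne (expPS f))
      = ∑ m ∈ range (n + 1), ∑ k ∈ range (n + 1), (k ! : ℚ)⁻¹ • coeff n (coeff m (f ^ k)) := by
        refine (coeff_mk _ _).trans (sum_congr rfl fun m hm => ?_)
        rw [coeff_expPS_eq_sum h0 (Nat.lt_succ_iff.mp (mem_range.mp hm)), map_sum]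
        simp only [coeff_smul]
    _ = coeff n (expPS (evalOne f)) := by
        rw [sum_comm, expPS, coeff_mk]
        refine sum_congr rfl fun k _ => ?_
        rw [← evalOne_pow hf, evalOne, coeff_mk, smul_sum]

lemma expMulX_mem_admissible {b : R⟦X⟧} (hb : constantCoeff b = 0) :
    expMulX b ∈ admissible := fun m : ℕ => by
  rw [coeff_expMulX, ← algebraMap_smul R]
  exact (le_order_pow_of_constantCoeff_eq_zero m hb).trans le_order_smul

lemma evalOne_expMulX (b : R⟦X⟧) : evalOne (expMulX b) = expPS b := by
  ext n
  simp [evalOne, expPS]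

lemma expm1DivAdSeries_mem_admissible {a c : R⟦X⟧} (ha : constantCoeff a = 0)
    (hc : constantCoeff c = 0) : expm1DivAdSeries c a ∈ admissible := by
  rintro (_ | k)
  · simp
  · rw [coeff_succ_expm1DivAdSeries, ← algebraMap_smul R]
    exact (le_order_iterate_lie ha hc k).trans le_order_smul

lemma evalOne_expm1DivAdSeries {a c : R⟦X⟧} (ha : constantCoeff a = 0)
    (hc : constantCoeff c = 0) : evalOne (expm1DivAdSeries c a) = expm1DivAd c a := by
  ext n
  rw [coeff_evalOne_eq_sum (expm1DivAdSeries_mem_admissible ha hc) n.le_succ, sum_range_succ',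
    expm1DivAd, coeff_mk]
  simp only [coeff_succ_expm1DivAdSeries, coeff_smul, coeff_zero_eq_constantCoeff,
    constantCoeff_expm1DivAdSeries, map_zero, add_zero]
  -- `adPow` iterates `C * X - X * C`, which is `⁅C, X⁆` by definition of the ring bracket
  rfl

end EvalOne

end PowerSeries

/-- Let `X` be a (rational) vector space and `A, C ∈ End(X)⟦z⟧`
formal power series of operators with zero constant term such that
`[A, ad_C^m(A)] = 0` for every `m ≥ 0`.  Then
`e^{A+C} · e^{−C} = exp( ((e^{ad_C} − 1)/ad_C)(A) )`. -/
theorem exp_sum_mul_exp_neg {V : Type*} [AddCommGroup V] [Module ℚ V]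
    (A C : PowerSeries (Module.End ℚ V))
    (hA : PowerSeries.constantCoeff A = 0)
    (hC : PowerSeries.constantCoeff C = 0)
    (hcomm : ∀ m : ℕ, A * adPow C m A = adPow C m A * A) :
    expPS (A + C) * expPS (-C) = expPS (expm1DivAd C A) := by
  have hAC : constantCoeff (A + C) = 0 := by rw [map_add, hA, hC, add_zero]
  have hnC : constantCoeff (-C) = 0 := by rw [map_neg, hC, neg_zero]
  rw [← evalOne_expMulX, ← evalOne_expMulX,
    ← evalOne_mul (expMulX_mem_admissible hAC) (expMulX_mem_admissible hnC),
    expMulX_add_mul_expMulX_neg hcomm,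
    evalOne_expPS (expm1DivAdSeries_mem_admissible hA hC) (constantCoeff_expm1DivAdSeries C A),
    evalOne_expm1DivAdSeries hA hC]
end

section
/- With Y_{ℓ,k} = [u^ℓ](Γ + uY)^{ℓ+k} defined as the sum of all words with ℓ letters Y and k letters Γ in an associative algebra, the following holds for 1 ≤ m ≤ ℓ: Y_{ℓ,k} = ∑_{i=0}^{k} Y_{m−1,i} · Y · Y_{ℓ−m, k−i}. -/
open Polynomial

/-- `YwordN Γ Y ℓ k = [u^ℓ] (Γ + u·Y)^{ℓ+k}`, i.e. the sum of all words with `ℓ`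
letters `Y` and `k` letters `Γ` (the polynomial variable `u` is central). -/
noncomputable def YwordN {R : Type*} [Ring R] (Γ Y : R) (l k : ℕ) : R :=
  ((C Γ + X * C Y) ^ (l + k)).coeff l

/-! With `F_ℓ = ∑_k Y_{ℓ,k} t^k` in `R⟦t⟧`, splitting a word at its first `Y` gives
`F_{ℓ+1} = F_0 · Y · F_ℓ`, hence `F_ℓ = (F_0 · Y)^ℓ · F_0`. By associativity
`F_{a+b+1} = F_a · Y · F_b`, and the identity is the coefficient of `t^k` of this
with `a = m - 1`, `b = ℓ - m`. -/

open Finset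

namespace YwordN

variable {R : Type*} [Ring R] (Γ Y : R)

theorem zero_left (k : ℕ) : YwordN Γ Y 0 k = Γ ^ k := by
  rw [YwordN, zero_add, ← constantCoeff_apply, map_pow]
  simp

theorem zero_right (l : ℕ) : YwordN Γ Y l 0 = Y ^ l := by
  have h : (C Γ + X * C Y).natDegree ≤ 1 := by compute_degree
  simpa [YwordN] using coeff_pow_of_natDegree_le (m := l) h

theorem succ_succ (l k : ℕ) :
    YwordN Γ Y (l + 1) (k + 1) = Γ * YwordN Γ Y (l + 1) k + Y * YwordN Γ Y l (k + 1) := by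
  simp only [YwordN, show l + 1 + (k + 1) = l + 1 + k + 1 by omega,
    show l + 1 + k = l + (k + 1) by omega, pow_succ', add_mul, coeff_add, coeff_C_mul, mul_assoc,
    coeff_X_mul]

theorem succ_eq_sum_antidiagonal (l k : ℕ) :
    YwordN Γ Y (l + 1) k = ∑ p ∈ antidiagonal k, Γ ^ p.1 * Y * YwordN Γ Y l p.2 := by
  induction k with
  | zero => simp [zero_right, pow_succ']
  | succ k ih =>
    rw [succ_succ, ih, Nat.sum_antidiagonal_succ, mul_sum, add_comm]
    simp only [pow_succ', pow_zero, one_mul, mul_assoc]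

end YwordN

noncomputable def YwordSeries {R : Type*} [Ring R] (Γ Y : R) (l : ℕ) : PowerSeries R :=
  PowerSeries.mk (YwordN Γ Y l)

namespace YwordSeries

variable {R : Type*} [Ring R] (Γ Y : R)

theorem succ (l : ℕ) :
    YwordSeries Γ Y (l + 1) = YwordSeries Γ Y 0 * PowerSeries.C Y * YwordSeries Γ Y l := by
  ext k
  rw [mul_assoc, PowerSeries.coeff_mul]
  simp only [YwordSeries, PowerSeries.coeff_C_mul, PowerSeries.coeff_mk,
    YwordN.succ_eq_sum_antidiagonal, YwordN.zero_left, mul_assoc]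

theorem eq_pow_mul (l : ℕ) :
    YwordSeries Γ Y l = (YwordSeries Γ Y 0 * PowerSeries.C Y) ^ l * YwordSeries Γ Y 0 := by
  induction l with
  | zero => rw [pow_zero, one_mul]
  | succ l ih => rw [succ, ih, pow_succ', mul_assoc, mul_assoc, mul_assoc]

theorem add_succ (a b : ℕ) :
    YwordSeries Γ Y (a + b + 1) = YwordSeries Γ Y a * PowerSeries.C Y * YwordSeries Γ Y b := by
  rw [eq_pow_mul _ _ (a + b + 1), eq_pow_mul _ _ a, eq_pow_mul _ _ b, add_right_comm, pow_add,
    pow_succ]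
  simp only [mul_assoc]

end YwordSeries

/-- For `1 ≤ m ≤ ℓ`:
`Y_{ℓ,k} = ∑_{i=0}^{k} Y_{m−1,i} · Y · Y_{ℓ−m, k−i}`
(expansion according to the position of the `m`-th occurrence of `Y`). -/
theorem Yword_split_at_mth_Y {R : Type*} [Ring R] (Γ Y : R) (l k m : ℕ)
    (hm1 : 1 ≤ m) (hml : m ≤ l) :
    YwordN Γ Y l k =
      ∑ i ∈ Finset.range (k + 1), YwordN Γ Y (m - 1) i * Y * YwordN Γ Y (l - m) (k - i) := by
  have hl : l = m - 1 + (l - m) + 1 := by omega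
  have h := congrArg (PowerSeries.coeff k) (YwordSeries.add_succ Γ Y (m - 1) (l - m))
  rw [← hl, mul_assoc, PowerSeries.coeff_mul, Nat.sum_antidiagonal_eq_sum_range_succ_mk] at h
  simpa only [YwordSeries, PowerSeries.coeff_C_mul, PowerSeries.coeff_mk, mul_assoc] using h
end
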